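/- (Lemma 1.) sup over {a : ‖a‖ = 1} of ‖ F_{k₁,k₂}(a)' F_{k₁,k₂}(a) / (T − (k₁+k₂)) − S(a) ‖_F converges to 0 almost surely as T → ∞. -/

import Mathlib

/-!
Entrywise, the sample matrix is `C(a) Â_T C(a)ᵀ` and the population matrix is `C(a) A C(a)ᵀ`,
where `X` is a fixed square-integrable regressor vector (the constant and lagged coordinates of
`z`), `Â_T` is a Birkhoff average of `X Xᵀ`, `A = 𝔼[X Xᵀ]`, and the coefficient matrix `C(a)` has
entries bounded by `‖a‖`. Hence the supremum over unit vectors `a` is at most a constant times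
`∑ |Â_T - A|`, which tends to zero almost surely by Birkhoff's pointwise ergodic theorem, proved
here from Garsia's maximal ergodic inequality.
-/

open MeasureTheory Filter

noncomputable section

namespace ODPC

variable {Ω : Type*} [MeasurableSpace Ω]

/-- Frobenius norm of a real matrix. -/
def frob {ι κ : Type*} [Fintype ι] [Fintype κ] (M : Matrix ι κ ℝ) : ℝ :=
  Real.sqrt (∑ i, ∑ j, (M i j) ^ 2)

/-- Smallest eigenvalue of a symmetric real matrix, via the Rayleigh quotient. -/
def lambdaMin {n : ℕ} (M : Matrix (Fin n) (Fin n) ℝ) : ℝ :=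
  ⨅ x : { x : EuclideanSpace ℝ (Fin n) // ‖x‖ = 1 }, ∑ i, ∑ j, x.1 i * M i j * x.1 j

/-- Largest eigenvalue of a symmetric real matrix, via the Rayleigh quotient. -/
def lambdaMax {n : ℕ} (M : Matrix (Fin n) (Fin n) ℝ) : ℝ :=
  ⨆ x : { x : EuclideanSpace ℝ (Fin n) // ‖x‖ = 1 }, ∑ i, ∑ j, x.1 i * M i j * x.1 j

variable (m k₁ k₂ : ℕ)

/-- The stationary process `z_t = Z ∘ τ^t`. -/
def zproc (Z : Ω → EuclideanSpace ℝ (Fin m)) (τ : Ω → Ω) (t : ℕ) (ω : Ω) :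
    EuclideanSpace ℝ (Fin m) := Z (τ^[t] ω)

/-- The one-sided dynamic principal component `f_t(a) = a'x_t`,
where `x_t = (z_t', …, z_{t-k₁}')`. -/
def comp (Z : Ω → EuclideanSpace ℝ (Fin m)) (τ : Ω → Ω)
    (a : EuclideanSpace ℝ (Fin (k₁ + 1) × Fin m)) (t : ℕ) (ω : Ω) : ℝ :=
  ∑ h : Fin (k₁ + 1), ∑ j : Fin m, a (h, j) * zproc m Z τ (t - h.1) ω j

/-- Reconstruction `z_t^R(a,D)`: the first row of `D` is the intercept `α`, the
remaining rows are the loadings `B`. -/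
def recon (Z : Ω → EuclideanSpace ℝ (Fin m)) (τ : Ω → Ω)
    (a : EuclideanSpace ℝ (Fin (k₁ + 1) × Fin m))
    (D : Matrix (Fin (k₂ + 2)) (Fin m) ℝ) (t : ℕ) (ω : Ω) :
    EuclideanSpace ℝ (Fin m) :=
  (WithLp.equiv 2 (Fin m → ℝ)).symm fun j =>
    D 0 j + ∑ h : Fin (k₂ + 1), D h.succ j * comp m k₁ Z τ a (t - h.1) ω

/-- Population mean squared reconstruction error `MSE₀(a,D)`. -/
def MSE₀ (μ : Measure Ω) (Z : Ω → EuclideanSpace ℝ (Fin m)) (τ : Ω → Ω)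
    (a : EuclideanSpace ℝ (Fin (k₁ + 1) × Fin m))
    (D : Matrix (Fin (k₂ + 2)) (Fin m) ℝ) : ℝ :=
  ∫ ω, ‖zproc m Z τ (k₁ + k₂) ω - recon m k₁ k₂ Z τ a D (k₁ + k₂) ω‖ ^ 2 ∂μ

/-- Sample mean squared reconstruction error `MSE_T(a,D)`. -/
def MSE (Z : Ω → EuclideanSpace ℝ (Fin m)) (τ : Ω → Ω) (T : ℕ)
    (a : EuclideanSpace ℝ (Fin (k₁ + 1) × Fin m))
    (D : Matrix (Fin (k₂ + 2)) (Fin m) ℝ) (ω : Ω) : ℝ :=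
  ((T : ℝ) - (k₁ + k₂))⁻¹ *
    ∑ t ∈ Finset.Ioc (k₁ + k₂) T,
      ‖zproc m Z τ t ω - recon m k₁ k₂ Z τ a D t ω‖ ^ 2

/-- Condition 1: no deterministic linear relation between `f_t(a), …, f_{t-k₂}(a)`
and a constant, uniformly over unit vectors `a`. -/
def Condition1 (μ : Measure Ω) (Z : Ω → EuclideanSpace ℝ (Fin m)) (τ : Ω → Ω) : Prop :=
  ∃ η : ℝ, η < 1 ∧
    ∀ a : EuclideanSpace ℝ (Fin (k₁ + 1) × Fin m), ‖a‖ = 1 →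
      ∀ v : Fin (k₂ + 2) → ℝ, v ≠ 0 →
        (μ {ω | ∑ h : Fin (k₂ + 1),
            v h.castSucc * comp m k₁ Z τ a (k₁ + k₂ - h.1) ω
              = v (Fin.last (k₂ + 1))}).toReal ≤ η

/-- The row `w_t(a) = (1, f_t(a), f_{t-1}(a), …, f_{t-k₂}(a))`. -/
def wvec (Z : Ω → EuclideanSpace ℝ (Fin m)) (τ : Ω → Ω)
    (a : EuclideanSpace ℝ (Fin (k₁ + 1) × Fin m)) (t : ℕ) (i : Fin (k₂ + 2)) (ω : Ω) : ℝ :=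
  if i.1 = 0 then 1 else comp m k₁ Z τ a (t - (i.1 - 1)) ω

/-- The population second-moment matrix `S(a) = 𝔼[w_t(a) w_t(a)']`. -/
def Smat (μ : Measure Ω) (Z : Ω → EuclideanSpace ℝ (Fin m)) (τ : Ω → Ω)
    (a : EuclideanSpace ℝ (Fin (k₁ + 1) × Fin m)) :
    Matrix (Fin (k₂ + 2)) (Fin (k₂ + 2)) ℝ :=
  fun i i' => ∫ ω, wvec m k₁ k₂ Z τ a (k₁ + k₂) i ω * wvec m k₁ k₂ Z τ a (k₁ + k₂) i' ω ∂μ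

/-- The sample second-moment matrix `F_{k₁,k₂}(a)'F_{k₁,k₂}(a)/(T-(k₁+k₂))`. -/
def Ssamp (Z : Ω → EuclideanSpace ℝ (Fin m)) (τ : Ω → Ω) (T : ℕ)
    (a : EuclideanSpace ℝ (Fin (k₁ + 1) × Fin m)) (ω : Ω) :
    Matrix (Fin (k₂ + 2)) (Fin (k₂ + 2)) ℝ :=
  fun i i' => ((T : ℝ) - (k₁ + k₂))⁻¹ *
    ∑ t ∈ Finset.Ioc (k₁ + k₂) T, wvec m k₁ k₂ Z τ a t i ω * wvec m k₁ k₂ Z τ a t i' ω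

/-- The set `𝓘` of minimizers of the population MSE. -/
def minimizers (μ : Measure Ω) (Z : Ω → EuclideanSpace ℝ (Fin m)) (τ : Ω → Ω) :
    Set ((EuclideanSpace ℝ (Fin (k₁ + 1) × Fin m)) × Matrix (Fin (k₂ + 2)) (Fin m) ℝ) :=
  {p | ‖p.1‖ = 1 ∧ ∀ a D, ‖a‖ = 1 → MSE₀ m k₁ k₂ μ Z τ p.1 p.2 ≤ MSE₀ m k₁ k₂ μ Z τ a D}

/-- The distance `d((a,D), 𝓘)`. -/
def distToMinimizers (μ : Measure Ω) (Z : Ω → EuclideanSpace ℝ (Fin m)) (τ : Ω → Ω)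
    (a : EuclideanSpace ℝ (Fin (k₁ + 1) × Fin m))
    (D : Matrix (Fin (k₂ + 2)) (Fin m) ℝ) : ℝ :=
  ⨅ p : minimizers m k₁ k₂ μ Z τ, (‖a - p.1.1‖ + frob (D - p.1.2))

open Finset Topology
open scoped Matrix

section BirkhoffSum

variable {α : Type*} {τ : α → α} {g : α → ℝ}

def birkhoffMax (τ : α → α) (g : α → ℝ) (N : ℕ) : α → ℝ :=
  (range (N + 1)).sup' nonempty_range_add_one (birkhoffSum τ g)

lemma birkhoffMax_apply (N : ℕ) (ω : α) :
    birkhoffMax τ g N ω = (range (N + 1)).sup' nonempty_range_add_one (birkhoffSum τ g · ω) :=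
  Finset.sup'_apply _ _ _

lemma birkhoffSum_le_birkhoffMax {n N : ℕ} (h : n ≤ N) (ω : α) :
    birkhoffSum τ g n ω ≤ birkhoffMax τ g N ω := by
  rw [birkhoffMax_apply]
  exact le_sup' (birkhoffSum τ g · ω) (mem_range_succ_iff.2 h)

lemma birkhoffMax_nonneg (N : ℕ) (ω : α) : 0 ≤ birkhoffMax τ g N ω := by
  simpa using birkhoffSum_le_birkhoffMax (τ := τ) (g := g) N.zero_le ω

lemma birkhoffMax_mono : Monotone (birkhoffMax τ g) := fun _ _ h =>
  sup'_mono _ (range_subset_range.2 (Nat.succ_le_succ h)) _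

lemma birkhoffMax_le_add_birkhoffMax_apply {N : ℕ} {ω : α} (h : 0 < birkhoffMax τ g N ω) :
    birkhoffMax τ g N ω ≤ g ω + birkhoffMax τ g N (τ ω) := by
  obtain ⟨n, hn, hmax⟩ := exists_mem_eq_sup' nonempty_range_add_one (birkhoffSum τ g · ω)
  rw [← birkhoffMax_apply] at hmax
  rw [hmax] at h ⊢
  obtain ⟨n, rfl⟩ : ∃ n', n = n' + 1 :=
    Nat.exists_eq_add_one.2 (Nat.pos_of_ne_zero (by rintro rfl; simp at h))
  rw [mem_range] at hn
  rw [birkhoffSum_succ']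
  gcongr
  exact birkhoffSum_le_birkhoffMax (by omega) _

lemma exists_birkhoffMax_pos_iff {ω : α} :
    (∃ N, 0 < birkhoffMax τ g N ω) ↔ ∃ n, 0 < birkhoffSum τ g n ω := by
  constructor
  · rintro ⟨N, hN⟩
    obtain ⟨n, -, hmax⟩ := exists_mem_eq_sup' nonempty_range_add_one (birkhoffSum τ g · ω)
    rw [← birkhoffMax_apply] at hmax
    exact ⟨n, hmax ▸ hN⟩
  · rintro ⟨n, hn⟩
    exact ⟨n, hn.trans_le (birkhoffSum_le_birkhoffMax le_rfl ω)⟩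

lemma frequently_mul_lt_of_le_add {x y : ℕ → ℝ} {β β' c : ℝ} (hβ : β' < β)
    (h : ∃ᶠ n in atTop, n * β < x n) (hxy : ∀ n, x n ≤ y n + c) :
    ∃ᶠ n in atTop, n * β' < y n := by
  have hev : ∀ᶠ n : ℕ in atTop, c < n * (β - β') :=
    (tendsto_natCast_atTop_atTop.atTop_mul_const (sub_pos.2 hβ)).eventually_gt_atTop c
  exact (h.and_eventually hev).mono fun n ⟨h₁, h₂⟩ => by linarith [hxy n]

lemma frequently_lt_birkhoffSum_apply {β β' : ℝ} (hβ : β' < β) {ω : α}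
    (h : ∃ᶠ n in atTop, n * β < birkhoffSum τ g n ω) :
    ∃ᶠ n in atTop, n * β' < birkhoffSum τ g n (τ ω) := by
  rw [← map_add_atTop_eq_nat 1, frequently_map] at h
  refine frequently_mul_lt_of_le_add (x := fun n => birkhoffSum τ g (n + 1) ω - β)
    (c := g ω - β) hβ (h.mono fun n hn => ?_) fun n => ?_
  · push_cast at hn
    linarith
  · rw [birkhoffSum_succ']
    linarith

lemma birkhoffSum_sub_const (c : ℝ) (n : ℕ) (ω : α) :
    birkhoffSum τ (fun x => g x - c) n ω = birkhoffSum τ g n ω - n * c := by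
  simp [birkhoffSum, sum_sub_distrib]

lemma inv_sub_smul_sum_Ioc_eq_birkhoffAverage {M : Type*} [AddCommGroup M] [Module ℝ M]
    (τ : α → α) (G : α → M) (k T : ℕ) (ω : α) :
    ((T : ℝ) - k)⁻¹ • ∑ t ∈ Ioc k T, G (τ^[t - k] ω) = birkhoffAverage ℝ τ G (T - k) (τ ω) := by
  rcases le_total T k with h | h
  · simp [Ioc_eq_empty_of_le h, Nat.sub_eq_zero_of_le h]
  · rw [birkhoffAverage, birkhoffSum, ← Nat.cast_sub h, ← Ico_add_one_add_one_eq_Ioc,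
      sum_Ico_eq_sum_range, show T + 1 - (k + 1) = T - k by omega]
    congr 1
    refine sum_congr rfl fun u _ => ?_
    rw [show k + 1 + u - k = u + 1 by omega, Function.iterate_succ_apply]

end BirkhoffSum

section PointwiseErgodic

variable {τ : Ω → Ω} {g : Ω → ℝ} {μ : Measure Ω}

lemma measurable_birkhoffSum (hτ : Measurable τ) (hg : Measurable g) (n : ℕ) :
    Measurable (birkhoffSum τ g n) :=
  Finset.measurable_sum _ fun i _ => hg.comp (hτ.iterate i)

lemma measurable_birkhoffMax (hτ : Measurable τ) (hg : Measurable g) (N : ℕ) :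
    Measurable (birkhoffMax τ g N) :=
  Finset.measurable_range_sup' fun n _ => measurable_birkhoffSum hτ hg n

lemma integrable_birkhoffSum (hτ : MeasurePreserving τ μ μ) (hg : Integrable g μ) (n : ℕ) :
    Integrable (birkhoffSum τ g n) μ :=
  integrable_finsetSum _ fun i _ => (hτ.iterate i).integrable_comp_of_integrable hg

lemma integrable_birkhoffMax (hτ : MeasurePreserving τ μ μ) (hg : Integrable g μ) (N : ℕ) :
    Integrable (birkhoffMax τ g N) μ :=
  sup'_induction _ _ (p := (Integrable · μ)) (fun _ h₁ _ h₂ => h₁.sup h₂) fun n _ =>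
    integrable_birkhoffSum hτ hg n

lemma integral_comp_eq_of_measurePreserving (hτ : MeasurePreserving τ μ μ) {F : Ω → ℝ}
    (hF : Measurable F) : ∫ ω, F (τ ω) ∂μ = ∫ ω, F ω ∂μ := by
  rw [← integral_map hτ.measurable.aemeasurable (hτ.map_eq ▸ hF.aestronglyMeasurable),
    hτ.map_eq]

lemma setIntegral_birkhoffMax_pos_nonneg (hτ : MeasurePreserving τ μ μ) (hgm : Measurable g)
    (hg : Integrable g μ) (N : ℕ) : 0 ≤ ∫ ω in {ω | 0 < birkhoffMax τ g N ω}, g ω ∂μ := by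
  set M := birkhoffMax τ g N
  have hMm : Measurable M := measurable_birkhoffMax hτ.measurable hgm N
  have hM : Integrable M μ := integrable_birkhoffMax hτ hg N
  have hMτ : Integrable (M ∘ τ) μ := hτ.integrable_comp_of_integrable hM
  have hE : MeasurableSet {ω | 0 < M ω} := measurableSet_lt measurable_const hMm
  -- Garsia: `M ≤ g + M ∘ τ` where `M > 0`, and `M = 0` elsewhere.
  calc 0 = ∫ ω, M ω ∂μ - ∫ ω, M (τ ω) ∂μ := by
        rw [integral_comp_eq_of_measurePreserving hτ hMm, sub_self]
    _ ≤ ∫ ω in {ω | 0 < M ω}, M ω ∂μ - ∫ ω in {ω | 0 < M ω}, M (τ ω) ∂μ := by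
        refine sub_le_sub (setIntegral_eq_integral_of_forall_compl_eq_zero fun ω hω => ?_).ge
          (setIntegral_le_integral hMτ (.of_forall fun ω => birkhoffMax_nonneg N (τ ω)))
        exact le_antisymm (not_lt.1 hω) (birkhoffMax_nonneg N ω)
    _ = ∫ ω in {ω | 0 < M ω}, (M ω - M (τ ω)) ∂μ :=
        (integral_sub hM.integrableOn hMτ.integrableOn).symm
    _ ≤ ∫ ω in {ω | 0 < M ω}, g ω ∂μ :=
        setIntegral_mono_on (hM.sub hMτ).integrableOn hg.integrableOn hE fun ω hω => by
          linarith [birkhoffMax_le_add_birkhoffMax_apply hω]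

lemma setIntegral_exists_birkhoffSum_pos_nonneg (hτ : MeasurePreserving τ μ μ)
    (hgm : Measurable g) (hg : Integrable g μ) :
    0 ≤ ∫ ω in {ω | ∃ n, 0 < birkhoffSum τ g n ω}, g ω ∂μ := by
  have hE : ∀ N, MeasurableSet {ω | 0 < birkhoffMax τ g N ω} := fun N =>
    measurableSet_lt measurable_const (measurable_birkhoffMax hτ.measurable hgm N)
  have hmono : Monotone fun N => {ω | 0 < birkhoffMax τ g N ω} := fun _ _ h ω hω =>
    hω.trans_le (birkhoffMax_mono h ω)
  have hunion : ⋃ N, {ω | 0 < birkhoffMax τ g N ω} = {ω | ∃ n, 0 < birkhoffSum τ g n ω} := by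
    ext ω
    simpa only [Set.mem_iUnion, Set.mem_ofPred_eq] using exists_birkhoffMax_pos_iff
  have hlim := tendsto_setIntegral_of_monotone hE hmono hg.integrableOn
  rw [hunion] at hlim
  exact ge_of_tendsto hlim (.of_forall fun N => setIntegral_birkhoffMax_pos_nonneg hτ hgm hg N)

lemma integral_nonneg_of_ae_exists_birkhoffSum_pos [IsProbabilityMeasure μ]
    (hτ : MeasurePreserving τ μ μ) (hgm : Measurable g) (hg : Integrable g μ)
    (h : ∀ᵐ ω ∂μ, ∃ n, 0 < birkhoffSum τ g n ω) : 0 ≤ ∫ ω, g ω ∂μ := by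
  have hE : {ω | ∃ n, 0 < birkhoffSum τ g n ω} =ᵐ[μ] Set.univ := ae_eq_univ.2 (mem_ae_iff.1 h)
  simpa only [setIntegral_congr_set hE, setIntegral_univ] using
    setIntegral_exists_birkhoffSum_pos_nonneg hτ hgm hg

lemma measurableSet_frequently_lt_birkhoffSum (hτ : Measurable τ) (hg : Measurable g) (β : ℝ) :
    MeasurableSet {ω | ∃ᶠ n in atTop, n * β < birkhoffSum τ g n ω} := by
  convert MeasurableSet.measurableSet_limsup (s := fun n : ℕ => {ω | n * β < birkhoffSum τ g n ω})
    fun n => measurableSet_lt measurable_const (measurable_birkhoffSum hτ hg n) using 1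
  ext ω
  rw [mem_limsup_iff_frequently_mem]
  rfl

lemma ae_eventually_birkhoffSum_le [IsProbabilityMeasure μ] (hτ : Ergodic τ μ)
    (hgm : Measurable g) (hg : Integrable g μ) {c : ℝ} (hc : ∫ ω, g ω ∂μ < c) :
    ∀ᵐ ω ∂μ, ∀ᶠ n in atTop, birkhoffSum τ g n ω ≤ n * c := by
  -- `F` is forward invariant, hence null or conull by ergodicity; if it were conull, the maximal
  -- ergodic theorem would give `∫ (g - q) ≥ 0`.
  obtain ⟨q, hgq, hqc⟩ := exists_between hc
  set F := {ω | ∃ β : ℚ, q < β ∧ ∃ᶠ n in atTop, n * (β : ℝ) < birkhoffSum τ g n ω}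
  have hFm : MeasurableSet F := by
    simp only [F, Set.ofPred_exists, Set.ofPred_and]
    exact .iUnion fun β => (MeasurableSet.const _).inter
      (measurableSet_frequently_lt_birkhoffSum hτ.measurable hgm β)
  have hFinv : F ⊆ τ ⁻¹' F := by
    rintro ω ⟨β, hqβ, hfreq⟩
    obtain ⟨β', hqβ', hβ'β⟩ := exists_rat_btwn hqβ
    exact ⟨β', hqβ', frequently_lt_birkhoffSum_apply (by exact_mod_cast hβ'β) hfreq⟩
  rcases hτ.ae_empty_or_univ_of_ae_le_preimage hFm.nullMeasurableSet hFinv.eventuallyLE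
    with hF | hF
  · obtain ⟨β, hqβ, hβc⟩ := exists_rat_btwn hqc
    filter_upwards [measure_eq_zero_iff_ae_notMem.1 (ae_eq_empty.1 hF)] with ω hω
    filter_upwards [not_frequently.1 fun h => hω ⟨β, hqβ, h⟩] with n hn
    exact (not_lt.1 hn).trans (by gcongr)
  · refine absurd (integral_nonneg_of_ae_exists_birkhoffSum_pos (g := fun ω => g ω - q)
      hτ.toMeasurePreserving (hgm.sub measurable_const) (hg.sub (integrable_const q)) ?_) ?_
    · filter_upwards [mem_ae_iff.2 (ae_eq_univ.1 hF)] with ω ⟨β, hqβ, hfreq⟩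
      obtain ⟨n, hn⟩ := hfreq.exists
      refine ⟨n, ?_⟩
      rw [birkhoffSum_sub_const]
      nlinarith [(Nat.cast_nonneg n : (0 : ℝ) ≤ n)]
    · rw [integral_sub hg (integrable_const q), integral_const, probReal_univ, one_smul]
      linarith

lemma ae_forall_rat_eventually_birkhoffSum_le [IsProbabilityMeasure μ] (hτ : Ergodic τ μ)
    (hgm : Measurable g) (hg : Integrable g μ) :
    ∀ᵐ ω ∂μ, ∀ c : ℚ, ∫ ω, g ω ∂μ < c → ∀ᶠ n in atTop, birkhoffSum τ g n ω ≤ n * c := by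
  refine ae_all_iff.2 fun c => ?_
  by_cases hc : ∫ ω, g ω ∂μ < c
  · exact (ae_eventually_birkhoffSum_le hτ hgm hg hc).mono fun _ h _ => h
  · exact .of_forall fun _ h => absurd h hc

lemma tendsto_inv_mul_of_forall_rat {s : ℕ → ℝ} {L : ℝ}
    (hup : ∀ c : ℚ, L < c → ∀ᶠ n in atTop, s n ≤ n * c)
    (hlow : ∀ c : ℚ, c < L → ∀ᶠ n in atTop, n * c ≤ s n) :
    Tendsto (fun n : ℕ => (n : ℝ)⁻¹ * s n) atTop (𝓝 L) := by
  refine tendsto_order.2 ⟨fun b hb => ?_, fun b hb => ?_⟩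
  · obtain ⟨c, hbc, hcL⟩ := exists_rat_btwn hb
    filter_upwards [hlow c hcL, eventually_gt_atTop 0] with n hn hn0
    rw [← div_eq_inv_mul, lt_div_iff₀ (by exact_mod_cast hn0)]
    nlinarith [(Nat.cast_pos.2 hn0 : (0 : ℝ) < n)]
  · obtain ⟨c, hLc, hcb⟩ := exists_rat_btwn hb
    filter_upwards [hup c hLc, eventually_gt_atTop 0] with n hn hn0
    rw [← div_eq_inv_mul, div_lt_iff₀ (by exact_mod_cast hn0)]
    nlinarith [(Nat.cast_pos.2 hn0 : (0 : ℝ) < n)]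

lemma ae_tendsto_birkhoffAverage_of_measurable [IsProbabilityMeasure μ] (hτ : Ergodic τ μ)
    (hgm : Measurable g) (hg : Integrable g μ) :
    ∀ᵐ ω ∂μ, Tendsto (birkhoffAverage ℝ τ g · ω) atTop (𝓝 (∫ ω, g ω ∂μ)) := by
  filter_upwards [ae_forall_rat_eventually_birkhoffSum_le hτ hgm hg,
    ae_forall_rat_eventually_birkhoffSum_le hτ hgm.neg hg.neg] with ω hup hlow
  refine tendsto_inv_mul_of_forall_rat hup fun c hc => ?_
  filter_upwards [hlow (-c) (by simpa [integral_neg] using hc)] with n hn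
  rw [birkhoffSum_neg] at hn
  push_cast at hn
  linarith

theorem ae_tendsto_birkhoffAverage [IsProbabilityMeasure μ] (hτ : Ergodic τ μ)
    (hg : Integrable g μ) :
    ∀ᵐ ω ∂μ, Tendsto (birkhoffAverage ℝ τ g · ω) atTop (𝓝 (∫ ω, g ω ∂μ)) := by
  set g' := hg.aestronglyMeasurable.mk g
  have hgg' : g =ᵐ[μ] g' := hg.aestronglyMeasurable.ae_eq_mk
  have hsame : ∀ᵐ ω ∂μ, ∀ n, birkhoffAverage ℝ τ g n ω = birkhoffAverage ℝ τ g' n ω :=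
    ae_all_iff.2 fun n =>
      hτ.quasiMeasurePreserving.birkhoffAverage_ae_eq_of_ae_eq ℝ hgg' n
  filter_upwards [hsame, ae_tendsto_birkhoffAverage_of_measurable hτ
    hg.aestronglyMeasurable.stronglyMeasurable_mk.measurable (hg.congr hgg')] with ω hω hlim
  simpa only [hω, integral_congr_ae hgg'] using hlim

lemma ae_tendsto_birkhoffAverage_sub_apply [IsProbabilityMeasure μ] (hτ : Ergodic τ μ)
    (hg : Integrable g μ) (k : ℕ) :
    ∀ᵐ ω ∂μ, Tendsto (fun T => birkhoffAverage ℝ τ g (T - k) (τ ω)) atTop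
      (𝓝 (∫ ω, g ω ∂μ)) :=
  hτ.quasiMeasurePreserving.ae (ae_tendsto_birkhoffAverage hτ hg) |>.mono fun _ h =>
    h.comp (tendsto_sub_atTop_nat k)

lemma ae_tendsto_birkhoffAverage_sub_apply_matrix [IsProbabilityMeasure μ] {κ ν : Type*}
    [Countable κ] [Countable ν] (hτ : Ergodic τ μ) {G : Ω → Matrix κ ν ℝ}
    (hG : ∀ o o', Integrable (fun ω => G ω o o') μ) (k : ℕ) :
    ∀ᵐ ω ∂μ, Tendsto (fun T => birkhoffAverage ℝ τ G (T - k) (τ ω)) atTop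
      (𝓝 (Matrix.of fun o o' => ∫ ω, G ω o o' ∂μ)) := by
  filter_upwards [ae_all_iff.2 fun o => ae_all_iff.2 fun o' =>
    ae_tendsto_birkhoffAverage_sub_apply hτ (hG o o') k] with ω hω
  refine tendsto_pi_nhds.2 fun o => tendsto_pi_nhds.2 fun o' => ?_
  exact (hω o o').congr fun T =>
    (map_birkhoffAverage ℝ ℝ (Matrix.entryLinearMap ℝ ℝ o o') τ G _ _).symm

end PointwiseErgodic

section MatrixSandwich

variable {ι κ : Type*} [Fintype κ]

lemma frob_le_sum_abs [Fintype ι] (M : Matrix ι κ ℝ) : frob M ≤ ∑ i, ∑ j, |M i j| := by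
  refine (Real.sqrt_le_left (sum_nonneg fun i _ => sum_nonneg fun j _ => abs_nonneg _)).2 ?_
  calc ∑ i, ∑ j, M i j ^ 2 = ∑ i, ∑ j, |M i j| ^ 2 := by simp only [sq_abs]
    _ ≤ ∑ i, (∑ j, |M i j|) ^ 2 :=
      sum_le_sum fun i _ => sum_sq_le_sq_sum_of_nonneg fun j _ => abs_nonneg _
    _ ≤ (∑ i, ∑ j, |M i j|) ^ 2 :=
      sum_sq_le_sq_sum_of_nonneg fun i _ => sum_nonneg fun j _ => abs_nonneg _

lemma abs_mul_mul_transpose_apply_le {C : Matrix ι κ ℝ} {K : ℝ} (hC : ∀ i o, |C i o| ≤ K)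
    (D : Matrix κ κ ℝ) (i j : ι) :
    |(C * D * Cᵀ) i j| ≤ K ^ 2 * ∑ o, ∑ o', |D o o'| := by
  calc |(C * D * Cᵀ) i j| = |∑ o', ∑ o, C i o * D o o' * C j o'| := by
        simp only [Matrix.mul_apply, Matrix.transpose_apply, sum_mul]
    _ ≤ ∑ o', ∑ o, |C i o| * |D o o'| * |C j o'| := by
        refine (abs_sum_le_sum_abs _ _).trans (sum_le_sum fun o' _ => ?_)
        refine (abs_sum_le_sum_abs _ _).trans_eq (sum_congr rfl fun o _ => ?_)
        rw [abs_mul, abs_mul]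
    _ ≤ ∑ o', ∑ o, K * |D o o'| * K := by
        refine sum_le_sum fun o' _ => sum_le_sum fun o _ => ?_
        have hK : 0 ≤ K := (abs_nonneg _).trans (hC i o)
        exact mul_le_mul (mul_le_mul_of_nonneg_right (hC i o) (abs_nonneg _)) (hC j o')
          (abs_nonneg _) (by positivity)
    _ = K ^ 2 * ∑ o, ∑ o', |D o o'| := by
        rw [sum_comm, mul_sum]
        refine sum_congr rfl fun o _ => ?_
        rw [mul_sum]
        exact sum_congr rfl fun o' _ => by ring

lemma tendsto_iSup_frob_mul_mul_transpose_sub [Fintype ι] {S : Type*} (C : S → Matrix ι κ ℝ)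
    {K : ℝ} (hC : ∀ s i o, |C s i o| ≤ K) {A : ℕ → Matrix κ κ ℝ} {A₀ : Matrix κ κ ℝ}
    (hA : Tendsto A atTop (𝓝 A₀)) :
    Tendsto (fun T => ⨆ s, frob (C s * A T * (C s)ᵀ - C s * A₀ * (C s)ᵀ)) atTop (𝓝 0) := by
  set B : ℕ → ℝ := fun T => ∑ _i : ι, ∑ _j : ι, K ^ 2 * ∑ o, ∑ o', |A T o o' - A₀ o o'|
  have hB : Tendsto B atTop (𝓝 0) := by
    have hentry : ∀ o o', Tendsto (fun T => |A T o o' - A₀ o o'|) atTop (𝓝 0) := fun o o' => by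
      simpa using (((hA.apply_nhds o).apply_nhds o').sub_const (A₀ o o')).abs
    simpa using tendsto_finsetSum _ fun (_ : ι) _ => tendsto_finsetSum _ fun (_ : ι) _ =>
      (tendsto_finsetSum _ fun o _ => tendsto_finsetSum _ fun o' _ => hentry o o').const_mul
        (K ^ 2)
  refine squeeze_zero (fun T => Real.iSup_nonneg fun s => Real.sqrt_nonneg _)
    (fun T => Real.iSup_le (fun s => ?_) ?_) hB
  · rw [← Matrix.sub_mul, ← Matrix.mul_sub]
    refine (frob_le_sum_abs _).trans (sum_le_sum fun i _ => sum_le_sum fun j _ => ?_)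
    exact abs_mul_mul_transpose_apply_le (hC s) _ i j
  · positivity

end MatrixSandwich

section Regressors

variable {α : Type*}

-- At `t = k₁ + k₂`, `w_t(a) = coeffs a *ᵥ regressors`: the block `(i, ·)` of the regressor vector
-- is `(1, x_{t-(i-1)})`, the data from which the entry `i` of `w_t(a)` is built.
def regressors (Z : α → EuclideanSpace ℝ (Fin m)) (τ : α → α) (ω : α) :
    Fin (k₂ + 2) × Option (Fin (k₁ + 1) × Fin m) → ℝ
  | (_, none) => 1
  | (i, some (h, j)) => zproc m Z τ (k₁ + k₂ - (i.1 - 1) - h.1) ω j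

def coeffs (a : EuclideanSpace ℝ (Fin (k₁ + 1) × Fin m)) :
    Matrix (Fin (k₂ + 2)) (Fin (k₂ + 2) × Option (Fin (k₁ + 1) × Fin m)) ℝ :=
  fun i io => if io.1 = i then
      match io.2 with
      | none => if i.1 = 0 then 1 else 0
      | some p => if i.1 = 0 then 0 else a p
    else 0

variable {m k₁ k₂} {Z : α → EuclideanSpace ℝ (Fin m)} {τ : α → α}
  {a : EuclideanSpace ℝ (Fin (k₁ + 1) × Fin m)}

lemma abs_coeffs_le (ha : ‖a‖ ≤ 1) (i : Fin (k₂ + 2))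
    (io : Fin (k₂ + 2) × Option (Fin (k₁ + 1) × Fin m)) : |coeffs m k₁ k₂ a i io| ≤ 1 := by
  have ha' : ∀ p, |a p| ≤ 1 := fun p => (PiLp.norm_apply_le a p).trans ha
  obtain ⟨i', _ | p⟩ := io <;> simp only [coeffs] <;> split_ifs <;> simp [ha']

lemma wvec_eq_mulVec (i : Fin (k₂ + 2)) (ω : α) :
    wvec m k₁ k₂ Z τ a (k₁ + k₂) i ω = (coeffs m k₁ k₂ a *ᵥ regressors m k₁ k₂ Z τ ω) i := by
  simp only [Matrix.mulVec, dotProduct, Fintype.sum_prod_type, coeffs, ite_mul, zero_mul,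
    Fintype.sum_option]
  by_cases h : i.1 = 0
  · simp [wvec, h, regressors]
  · simp [wvec, h, regressors, comp, Nat.sub_sub]

lemma wvec_of_le {t : ℕ} (ht : k₁ + k₂ ≤ t) (i : Fin (k₂ + 2)) (ω : α) :
    wvec m k₁ k₂ Z τ a t i ω = wvec m k₁ k₂ Z τ a (k₁ + k₂) i (τ^[t - (k₁ + k₂)] ω) := by
  by_cases h : i.1 = 0
  · simp [wvec, h]
  · simp only [wvec, if_neg h, comp, zproc, ← Function.iterate_add_apply]
    refine sum_congr rfl fun l _ => sum_congr rfl fun j _ => ?_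
    rw [show k₁ + k₂ - (i.1 - 1) - l.1 + (t - (k₁ + k₂)) = t - (i.1 - 1) - l.1 by
      have := l.isLt; have := i.isLt; omega]

lemma vecMulVec_wvec (ω : α) :
    Matrix.vecMulVec (wvec m k₁ k₂ Z τ a (k₁ + k₂) · ω) (wvec m k₁ k₂ Z τ a (k₁ + k₂) · ω) =
      coeffs m k₁ k₂ a * Matrix.vecMulVec (regressors m k₁ k₂ Z τ ω) (regressors m k₁ k₂ Z τ ω) *
        (coeffs m k₁ k₂ a)ᵀ := by
  rw [Matrix.mul_vecMulVec, Matrix.vecMulVec_mul, Matrix.vecMul_transpose]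
  congr 1 <;> exact funext fun i => wvec_eq_mulVec i ω

lemma Ssamp_eq_mul_birkhoffAverage_mul (T : ℕ) (ω : α) :
    Ssamp m k₁ k₂ Z τ T a ω = coeffs m k₁ k₂ a *
      birkhoffAverage ℝ τ
        (fun ω => Matrix.vecMulVec (regressors m k₁ k₂ Z τ ω) (regressors m k₁ k₂ Z τ ω))
        (T - (k₁ + k₂)) (τ ω) * (coeffs m k₁ k₂ a)ᵀ := by
  set C := coeffs m k₁ k₂ a
  set G := fun ω => Matrix.vecMulVec (regressors m k₁ k₂ Z τ ω) (regressors m k₁ k₂ Z τ ω)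
  have hsum : Ssamp m k₁ k₂ Z τ T a ω = ((T : ℝ) - (k₁ + k₂ : ℕ))⁻¹ •
      ∑ t ∈ Ioc (k₁ + k₂) T, C * G (τ^[t - (k₁ + k₂)] ω) * Cᵀ := by
    ext i i'
    simp only [Ssamp, Matrix.smul_apply, Matrix.sum_apply, smul_eq_mul, Nat.cast_add]
    congr 1
    refine sum_congr rfl fun t ht => ?_
    have ht : k₁ + k₂ ≤ t := (mem_Ioc.1 ht).1.le
    rw [← vecMulVec_wvec, Matrix.vecMulVec_apply, wvec_of_le ht, wvec_of_le ht]
  rw [hsum, inv_sub_smul_sum_Ioc_eq_birkhoffAverage τ (fun x => C * G x * Cᵀ)]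
  exact map_birkhoffAverage ℝ ℝ
    ((mulRightLinearMap _ ℝ Cᵀ).comp (mulLeftLinearMap _ ℝ C)) τ G _ _ |>.symm

end Regressors

section RegressorMoments

variable {μ : Measure Ω}

lemma integral_mul_mul_apply {ι κ ν ρ : Type*} [Fintype κ] [Fintype ν] (A : Matrix ι κ ℝ)
    (B : Matrix ν ρ ℝ) {G : Ω → Matrix κ ν ℝ} (hG : ∀ o o', Integrable (fun ω => G ω o o') μ)
    (i : ι) (j : ρ) :
    ∫ ω, (A * G ω * B) i j ∂μ = (A * Matrix.of (fun o o' => ∫ ω, G ω o o' ∂μ) * B) i j := by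
  simp only [Matrix.mul_apply, Matrix.of_apply, sum_mul]
  rw [integral_finsetSum _ fun o' _ => integrable_finsetSum _ fun o _ =>
    ((hG o o').const_mul _).mul_const _]
  refine sum_congr rfl fun o' _ => ?_
  rw [integral_finsetSum _ fun o _ => ((hG o o').const_mul _).mul_const _]
  refine sum_congr rfl fun o _ => ?_
  rw [integral_mul_const, integral_const_mul]

variable {m k₁ k₂} {Z : Ω → EuclideanSpace ℝ (Fin m)} {τ : Ω → Ω}

lemma memLp_regressors [IsFiniteMeasure μ] (hτ : MeasurePreserving τ μ μ) (hZ : MemLp Z 2 μ)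
    (io : Fin (k₂ + 2) × Option (Fin (k₁ + 1) × Fin m)) :
    MemLp (regressors m k₁ k₂ Z τ · io) 2 μ := by
  obtain ⟨i, _ | ⟨h, j⟩⟩ := io
  · exact memLp_const 1
  · exact ((EuclideanSpace.proj (𝕜 := ℝ) j).comp_memLp' hZ).comp_measurePreserving (hτ.iterate _)

lemma integrable_vecMulVec_regressors [IsFiniteMeasure μ] (hτ : MeasurePreserving τ μ μ)
    (hZ : MemLp Z 2 μ) (io io' : Fin (k₂ + 2) × Option (Fin (k₁ + 1) × Fin m)) :
    Integrable (fun ω =>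
      Matrix.vecMulVec (regressors m k₁ k₂ Z τ ω) (regressors m k₁ k₂ Z τ ω) io io') μ :=
  (memLp_regressors hτ hZ io).integrable_mul (memLp_regressors hτ hZ io')

lemma Smat_eq_mul_integral_mul [IsFiniteMeasure μ] (hτ : MeasurePreserving τ μ μ)
    (hZ : MemLp Z 2 μ) (a : EuclideanSpace ℝ (Fin (k₁ + 1) × Fin m)) :
    Smat m k₁ k₂ μ Z τ a = coeffs m k₁ k₂ a *
      Matrix.of (fun io io' => ∫ ω,
        Matrix.vecMulVec (regressors m k₁ k₂ Z τ ω) (regressors m k₁ k₂ Z τ ω) io io' ∂μ) *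
      (coeffs m k₁ k₂ a)ᵀ := by
  ext i i'
  rw [← integral_mul_mul_apply _ _ (integrable_vecMulVec_regressors hτ hZ)]
  exact integral_congr_ae (.of_forall fun ω => congrFun₂ (vecMulVec_wvec ω) i i')

end RegressorMoments

variable (μ : Measure Ω) [IsProbabilityMeasure μ]

theorem stmt5 (τ : Ω → Ω) (hτ : Ergodic τ μ)
    (Z : Ω → EuclideanSpace ℝ (Fin m)) (hZ : MemLp Z 2 μ) :
    ∀ᵐ ω ∂μ, Tendsto
      (fun T => ⨆ a : { a : EuclideanSpace ℝ (Fin (k₁ + 1) × Fin m) // ‖a‖ = 1 },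
        frob (Ssamp m k₁ k₂ Z τ T a.1 ω - Smat m k₁ k₂ μ Z τ a.1))
      atTop (nhds 0) := by
  filter_upwards [ae_tendsto_birkhoffAverage_sub_apply_matrix hτ
    (G := fun ω => Matrix.vecMulVec (regressors m k₁ k₂ Z τ ω) (regressors m k₁ k₂ Z τ ω))
    (integrable_vecMulVec_regressors hτ.toMeasurePreserving hZ) (k₁ + k₂)] with ω hω
  simp only [Ssamp_eq_mul_birkhoffAverage_mul, Smat_eq_mul_integral_mul hτ.toMeasurePreserving hZ]
  exact tendsto_iSup_frob_mul_mul_transpose_sub _ (fun a => abs_coeffs_le a.2.le) hω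

end ODPC
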